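/- arXiv:2011.03786 — 2 statements merged into one kernel-verified Lean document; each statement's English description precedes it below -/
import Mathlib

section
/- Let α = [0; a₁, a₂, …] ∈ (0,1) be irrational with convergents pₙ/qₙ and θₙ = qₙα − pₙ. Let (sᵢ), (tᵢ) be sequences of natural numbers with sᵢ < tᵢ, s_{i+1} = tᵢ + 2 for all i, and |tᵢ − sᵢ| → ∞. Then the element β = Σ_{i=1}^∞ θ_{tᵢ+1} (taken mod 1, as an element of 𝕋) has the following property (⋆): for every ε > 0 there exists B ⊆ ℕ with natural density d(B) = 0 such that for every n ∉ B and every integer r with 1 ≤ r ≤ a_{n+1}, one has ‖r qₙ β‖ < ε. -/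
open Filter Topology

noncomputable section

/-- The circle group `𝕋 = ℝ/ℤ`. -/
abbrev Circle1 : Type := AddCircle (1 : ℝ)

/-- A set of naturals has natural density zero. -/
def DensityZero (A : Set ℕ) : Prop :=
  Tendsto (fun n : ℕ => ((A ∩ Set.Icc 1 n).ncard : ℝ) / n) atTop (𝓝 0)

/-- Statistical convergence to `0` of a sequence in the circle. -/
def StatTendstoZero (x : ℕ → Circle1) : Prop :=
  ∀ ε : ℝ, 0 < ε → DensityZero {n : ℕ | ε ≤ ‖x n‖}

/-- The characterized subgroup `t_(a_n)(𝕋)`. -/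
def charSet (a : ℕ → ℤ) : Set Circle1 :=
  {x : Circle1 | Tendsto (fun n : ℕ => a n • x) atTop (𝓝 0)}

/-- The statistically characterized subgroup `t^s_(a_n)(𝕋)`. -/
def statCharSet (a : ℕ → ℤ) : Set Circle1 :=
  {x : Circle1 | StatTendstoZero (fun n : ℕ => a n • x)}

namespace CF

/-- Gauss-map orbit of `α`: `G α 0 = α`, `G α (n+1) = {1 / G α n}`. -/
def G (α : ℝ) : ℕ → ℝ
  | 0 => α
  | n + 1 => Int.fract (G α n)⁻¹

/-- The partial quotients of the regular continued fraction `α = [0; a 1, a 2, …]`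
(with the convention `a 0 = 0`). -/
def a (α : ℝ) : ℕ → ℕ
  | 0 => 0
  | n + 1 => ⌊(G α n)⁻¹⌋₊

/-- Denominators of the convergents of the continued fraction of `α`. -/
def q (α : ℝ) : ℕ → ℕ
  | 0 => 1
  | 1 => a α 1
  | (n + 2) => a α (n + 2) * q α (n + 1) + q α n

/-- Numerators of the convergents of the continued fraction of `α`. -/
def p (α : ℝ) : ℕ → ℕ
  | 0 => 0
  | 1 => 1
  | (n + 2) => a α (n + 2) * p α (n + 1) + p α n

/-- `θ n = q n * α - p n`. -/
def θ (α : ℝ) (n : ℕ) : ℝ := (q α n : ℝ) * α - (p α n : ℝ)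

end CF

open CF

/-!
Split `β` at the `i`-th term: `β = ∑_{j<i} θ (t j + 1) + Tᵢ`. Modulo `1`,
`q n * θ m ≡ q m * θ n` (both are `q m * q n * α`), so `r * q n` times the head is
`≡ r * θ n * ∑_{j<i} q (t j + 1)`. The denominators at least double every two indices, so this sum
is at most `2 * q (t (i-1) + 1) ≤ 2 * q n / 2 ^ k` once `s i + 2k ≤ n`; as
`r * q n * |θ n| ≤ q (n+1) * |θ n| ≤ 1`, the head contributes at most `2 / 2 ^ k`. By the same
doubling `q (t i + 2) * |Tᵢ| ≤ 2`, while `r * q n ≤ q (n+1) ≤ q (t i + 2) / 2 ^ k` once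
`n + 2k ≤ t i`. Hence `‖r q n β‖ ≤ 4 / 2 ^ k` unless `n` lies within `2k` of an end of its block
`[s i, s (i+1))`; such `n` meet every block in at most `4k + 1` points, and the block lengths tend
to infinity, so they form a set of density zero.
-/

theorem sum_range_succ_le_two_mul {x : ℕ → ℕ} (hx : ∀ j, 2 * x j ≤ x (j + 1)) (i : ℕ) :
    ∑ j ∈ Finset.range (i + 1), x j ≤ 2 * x i := by
  induction i with
  | zero => simp only [zero_add, Finset.sum_range_one]; omega
  | succ i ih =>
    rw [Finset.sum_range_succ]
    linarith [hx i]

theorem le_geometric_of_two_mul_le {w : ℕ → ℝ} (hw : ∀ j, 2 * w (j + 1) ≤ w j) (j : ℕ) :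
    w j ≤ w 0 * (1 / 2) ^ j := by
  induction j with
  | zero => simp
  | succ j ih =>
    rw [pow_succ]
    linarith [hw j]

theorem summable_and_tsum_le_of_two_mul_le {w : ℕ → ℝ} (hw0 : ∀ j, 0 ≤ w j)
    (hw : ∀ j, 2 * w (j + 1) ≤ w j) : Summable w ∧ ∑' j, w j ≤ 2 * w 0 := by
  have hgeom : HasSum (fun j ↦ w 0 * (1 / 2 : ℝ) ^ j) (w 0 * 2) := by
    simpa using hasSum_geometric_two.mul_left (w 0)
  have hsum : Summable w := hgeom.summable.of_nonneg_of_le hw0 (le_geometric_of_two_mul_le hw)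
  refine ⟨hsum, ?_⟩
  rw [mul_comm]
  exact hasSum_le (le_geometric_of_two_mul_le hw) hsum.hasSum hgeom

theorem norm_coe_le_abs (x : ℝ) : ‖(x : Circle1)‖ ≤ |x| :=
  QuotientAddGroup.norm_mk_le_norm.trans_eq (Real.norm_eq_abs x)

namespace CF

variable {α : ℝ}

theorem G_mem_Ioo_and_irrational (hα : α ∈ Set.Ioo (0 : ℝ) 1) (hirr : Irrational α) (n : ℕ) :
    G α n ∈ Set.Ioo (0 : ℝ) 1 ∧ Irrational (G α n) := by
  induction n with
  | zero => exact ⟨hα, hirr⟩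
  | succ n ih =>
    have hfract : Irrational (Int.fract (G α n)⁻¹) := ih.2.inv.sub_intCast _
    exact ⟨⟨(Int.fract_nonneg _).lt_of_ne' hfract.ne_zero, Int.fract_lt_one _⟩, hfract⟩

theorem inv_G_eq {n : ℕ} (h : 0 ≤ G α n) : (G α n)⁻¹ = a α (n + 1) + G α (n + 1) := by
  rw [a, G, natCast_floor_eq_intCast_floor (inv_nonneg.mpr h), Int.floor_add_fract]

theorem one_le_a {n : ℕ} (h : G α n ∈ Set.Ioo (0 : ℝ) 1) : 1 ≤ a α (n + 1) :=
  Nat.le_floor <| by exact_mod_cast ((one_lt_inv₀ h.1).mpr h.2).le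

theorem a_mul_q_le_q_succ (n : ℕ) : a α (n + 1) * q α n ≤ q α (n + 1) := by
  cases n with
  | zero => simp [q]
  | succ m => exact Nat.le_add_right _ _

theorem q_le_q_succ (ha : ∀ n, 1 ≤ a α (n + 1)) (n : ℕ) : q α n ≤ q α (n + 1) := by
  cases n with
  | zero => simpa [q] using ha 0
  | succ m => exact (Nat.le_mul_of_pos_left _ (ha (m + 1))).trans (Nat.le_add_right _ _)

theorem q_mono (ha : ∀ n, 1 ≤ a α (n + 1)) : Monotone (q α) :=
  monotone_nat_of_le_succ (q_le_q_succ ha)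

theorem one_le_q (ha : ∀ n, 1 ≤ a α (n + 1)) (n : ℕ) : 1 ≤ q α n :=
  (show 1 ≤ q α 0 from le_rfl).trans (q_mono ha n.zero_le)

theorem two_mul_q_le_q_add_two (ha : ∀ n, 1 ≤ a α (n + 1)) (n : ℕ) :
    2 * q α n ≤ q α (n + 2) := by
  have h := Nat.mul_le_mul (ha (n + 1)) (q_le_q_succ ha n)
  show 2 * q α n ≤ a α (n + 1 + 1) * q α (n + 1) + q α n
  omega

theorem two_mul_q_le_of_add_two_le (ha : ∀ n, 1 ≤ a α (n + 1)) {m n : ℕ} (h : m + 2 ≤ n) :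
    2 * q α m ≤ q α n :=
  (two_mul_q_le_q_add_two ha m).trans (q_mono ha h)

theorem two_pow_mul_q_le (ha : ∀ n, 1 ≤ a α (n + 1)) (n k : ℕ) :
    2 ^ k * q α n ≤ q α (n + 2 * k) := by
  induction k with
  | zero => simp
  | succ k ih =>
    calc 2 ^ (k + 1) * q α n = 2 * (2 ^ k * q α n) := by ring
      _ ≤ 2 * q α (n + 2 * k) := Nat.mul_le_mul_left 2 ih
      _ ≤ q α (n + 2 * (k + 1)) := two_mul_q_le_q_add_two ha _

theorem θ_eq_neg_one_pow_mul_prod (hG : ∀ n, 0 < G α n) :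
    ∀ n, θ α n = (-1) ^ n * ∏ k ∈ Finset.range (n + 1), G α k
  | 0 => by simp [θ, q, p, G]
  | 1 => by
    have h := mul_inv_cancel₀ (hG 0).ne'
    rw [inv_G_eq (hG 0).le] at h
    simp only [θ, q, p, G, Finset.prod_range_succ, Finset.prod_range_zero] at h ⊢
    linear_combination h
  | n + 2 => by
    have h := mul_inv_cancel₀ (hG (n + 1)).ne'
    rw [inv_G_eq (hG (n + 1)).le] at h
    have hθ : θ α (n + 2) = a α (n + 2) * θ α (n + 1) + θ α n := by
      simp only [θ, q, p]; push_cast; ring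
    rw [hθ, θ_eq_neg_one_pow_mul_prod hG n, θ_eq_neg_one_pow_mul_prod hG (n + 1),
      Finset.prod_range_succ _ (n + 2), Finset.prod_range_succ _ (n + 1)]
    linear_combination -(-1) ^ n * (∏ k ∈ Finset.range (n + 1), G α k) * h

theorem neg_one_pow_mul_θ (hG : ∀ n, 0 < G α n) (n : ℕ) : (-1) ^ n * θ α n = |θ α n| := by
  have hprod : 0 < ∏ k ∈ Finset.range (n + 1), G α k := Finset.prod_pos fun k _ ↦ hG k
  rw [θ_eq_neg_one_pow_mul_prod hG, ← mul_assoc, ← mul_pow, abs_mul, abs_pow]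
  simp [abs_of_pos hprod]

theorem p_succ_mul_q_sub_p_mul_q_succ (n : ℕ) :
    (p α (n + 1) * q α n - p α n * q α (n + 1) : ℤ) = (-1) ^ n := by
  induction n with
  | zero => simp [p, q]
  | succ n ih =>
    simp only [p, q, Nat.cast_add, Nat.cast_mul, pow_succ]
    linear_combination (-1 : ℤ) * ih

theorem q_succ_mul_abs_θ_add (hG : ∀ n, 0 < G α n) (n : ℕ) :
    q α (n + 1) * |θ α n| + q α n * |θ α (n + 1)| = 1 := by
  have hdet : (p α (n + 1) * q α n - p α n * q α (n + 1) : ℝ) = (-1) ^ n := by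
    exact_mod_cast p_succ_mul_q_sub_p_mul_q_succ n
  have hsq : ((-1 : ℝ) ^ n) * (-1) ^ n = 1 := by rw [← mul_pow]; simp
  rw [← neg_one_pow_mul_θ hG, ← neg_one_pow_mul_θ hG]
  simp only [θ]
  linear_combination (-1) ^ n * hdet + hsq

theorem q_succ_mul_abs_θ_le_one (hG : ∀ n, 0 < G α n) (n : ℕ) :
    q α (n + 1) * |θ α n| ≤ 1 := by
  have h := q_succ_mul_abs_θ_add hG n
  have : 0 ≤ (q α n : ℝ) * |θ α (n + 1)| := by positivity
  linarith

theorem coe_θ (n : ℕ) : (θ α n : Circle1) = q α n • (α : Circle1) := by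
  have hp : ((p α n : ℝ) : Circle1) = 0 := by
    rw [AddCircle.coe_eq_zero_iff]
    exact ⟨p α n, by simp⟩
  rw [θ, AddCircle.coe_sub, hp, sub_zero, ← AddCircle.coe_nsmul, nsmul_eq_mul]

theorem nsmul_coe_θ (m n : ℕ) : q α n • (θ α m : Circle1) = ((q α m * θ α n : ℝ) : Circle1) := by
  rw [← nsmul_eq_mul, AddCircle.coe_nsmul, coe_θ, coe_θ, smul_comm]

theorem nsmul_coe_sum_θ (u : ℕ → ℕ) (i n r : ℕ) :
    (r * q α n) • ((∑ j ∈ Finset.range i, θ α (u j) : ℝ) : Circle1) =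
      ((r * θ α n * ∑ j ∈ Finset.range i, (q α (u j) : ℝ) : ℝ) : Circle1) := by
  induction i with
  | zero => simp
  | succ i ih =>
    rw [Finset.sum_range_succ, Finset.sum_range_succ, AddCircle.coe_add, smul_add, ih, mul_nsmul',
      nsmul_coe_θ, ← AddCircle.coe_nsmul, nsmul_eq_mul, ← AddCircle.coe_add]
    ring_nf

theorem norm_nsmul_coe_tsum_θ_le {u : ℕ → ℕ} (hsum : Summable fun j ↦ θ α (u j)) (i n r : ℕ) :
    ‖(r * q α n) • ((∑' j, θ α (u j) : ℝ) : Circle1)‖ ≤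
      r * |θ α n| * ∑ j ∈ Finset.range i, (q α (u j) : ℝ) +
        r * q α n * |∑' j, θ α (u (j + i))| := by
  rw [← hsum.sum_add_tsum_nat_add i, AddCircle.coe_add, smul_add, nsmul_coe_sum_θ,
    ← AddCircle.coe_nsmul, nsmul_eq_mul]
  refine (norm_add_le _ _).trans (add_le_add ((norm_coe_le_abs _).trans_eq ?_)
    ((norm_coe_le_abs _).trans_eq ?_))
  · rw [abs_mul, abs_mul, Nat.abs_cast,
      abs_of_nonneg (a := ∑ j ∈ Finset.range i, (q α (u j) : ℝ)) (by positivity)]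
  · push_cast
    rw [abs_mul, abs_mul, Nat.abs_cast, Nat.abs_cast]

theorem summable_θ_comp_and_abs_tsum_le (hG : ∀ n, G α n ∈ Set.Ioo (0 : ℝ) 1) {u : ℕ → ℕ}
    (hu : ∀ j, u j + 2 ≤ u (j + 1)) :
    Summable (fun j ↦ θ α (u j)) ∧ q α (u 0 + 1) * |∑' j, θ α (u j)| ≤ 2 := by
  have ha : ∀ n, 1 ≤ a α (n + 1) := fun n ↦ one_le_a (hG n)
  have hqpos : ∀ j, (0 : ℝ) < q α (u j + 1) := fun j ↦ by exact_mod_cast one_le_q ha _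
  have hθw : ∀ j, |θ α (u j)| ≤ (q α (u j + 1) : ℝ)⁻¹ := fun j ↦ by
    rw [← one_div, le_div_iff₀' (hqpos j)]
    exact q_succ_mul_abs_θ_le_one (fun n ↦ (hG n).1) _
  have hw : ∀ j, 2 * (q α (u (j + 1) + 1) : ℝ)⁻¹ ≤ (q α (u j + 1) : ℝ)⁻¹ := fun j ↦ by
    have h : (2 * q α (u j + 1) : ℝ) ≤ q α (u (j + 1) + 1) := by
      exact_mod_cast two_mul_q_le_of_add_two_le ha (by linarith [hu j])
    rw [← div_eq_mul_inv, div_le_iff₀ (hqpos _), mul_comm, ← div_eq_mul_inv,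
      le_div_iff₀ (hqpos _)]
    linarith
  obtain ⟨hwsum, hwle⟩ := summable_and_tsum_le_of_two_mul_le
    (w := fun j ↦ (q α (u j + 1) : ℝ)⁻¹) (fun j ↦ by positivity) hw
  have habs : Summable (fun j ↦ |θ α (u j)|) := hwsum.of_nonneg_of_le (fun j ↦ abs_nonneg _) hθw
  refine ⟨habs.of_abs, ?_⟩
  have hle : |∑' j, θ α (u j)| ≤ 2 * (q α (u 0 + 1) : ℝ)⁻¹ :=
    calc |∑' j, θ α (u j)| ≤ ∑' j, |θ α (u j)| := by
          have h := norm_tsum_le_tsum_norm (f := fun j ↦ θ α (u j)) habs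
          simpa only [Real.norm_eq_abs] using h
      _ ≤ ∑' j, (q α (u j + 1) : ℝ)⁻¹ := habs.tsum_le_tsum hθw hwsum
      _ ≤ 2 * (q α (u 0 + 1) : ℝ)⁻¹ := hwle
  rwa [← div_eq_mul_inv, le_div_iff₀' (hqpos 0)] at hle

section Blocks

variable {s t : ℕ → ℕ}

theorem sum_q_mul_two_pow_le (ha : ∀ n, 1 ≤ a α (n + 1)) (hcons : ∀ i, s (i + 1) = t i + 2)
    (hgap : ∀ j, t j + 1 + 2 ≤ t (j + 1) + 1) {i k n : ℕ} (hs : s i + 2 * k ≤ n) :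
    (∑ j ∈ Finset.range i, q α (t j + 1)) * 2 ^ k ≤ 2 * q α n := by
  rcases i with _ | i
  · simp
  have hdouble : ∀ j, 2 * q α (t j + 1) ≤ q α (t (j + 1) + 1) := fun j ↦
    two_mul_q_le_of_add_two_le ha (hgap j)
  have hq : 2 ^ k * q α (t i + 1) ≤ q α n :=
    (two_pow_mul_q_le ha _ k).trans (q_mono ha (by linarith [hcons i]))
  calc (∑ j ∈ Finset.range (i + 1), q α (t j + 1)) * 2 ^ k
      ≤ 2 * q α (t i + 1) * 2 ^ k := Nat.mul_le_mul_right _ (sum_range_succ_le_two_mul hdouble i)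
    _ = 2 * (2 ^ k * q α (t i + 1)) := by ring
    _ ≤ 2 * q α n := Nat.mul_le_mul_left 2 hq

theorem norm_nsmul_coe_tsum_θ_le_four_div (hG : ∀ n, G α n ∈ Set.Ioo (0 : ℝ) 1)
    (hst : ∀ i, s i < t i) (hcons : ∀ i, s (i + 1) = t i + 2) {i k n r : ℕ}
    (hs : s i + 2 * k ≤ n) (ht : n + 2 * k ≤ t i) (hr : r ≤ a α (n + 1)) :
    ‖(r * q α n) • ((∑' j, θ α (t j + 1) : ℝ) : Circle1)‖ ≤ 4 / 2 ^ k := by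
  have ha : ∀ n, 1 ≤ a α (n + 1) := fun n ↦ one_le_a (hG n)
  have hgap : ∀ j, t j + 1 + 2 ≤ t (j + 1) + 1 := fun j ↦ by linarith [hcons j, hst (j + 1)]
  have hsum := (summable_θ_comp_and_abs_tsum_le hG (u := fun j ↦ t j + 1) hgap).1
  have htail : q α (t i + 2) * |∑' j, θ α (t (j + i) + 1)| ≤ 2 := by
    simpa using (summable_θ_comp_and_abs_tsum_le hG (u := fun j ↦ t (j + i) + 1)
      fun j ↦ by simpa only [Nat.add_right_comm j 1 i] using hgap (j + i)).2
  have hrq : r * q α n ≤ q α (n + 1) := (Nat.mul_le_mul_right _ hr).trans (a_mul_q_le_q_succ n)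
  have hrqθ : (r * q α n : ℝ) * |θ α n| ≤ 1 :=
    (mul_le_mul_of_nonneg_right (by exact_mod_cast hrq) (abs_nonneg _)).trans
      (q_succ_mul_abs_θ_le_one (fun n ↦ (hG n).1) n)
  have hhead : (∑ j ∈ Finset.range i, (q α (t j + 1) : ℝ)) * 2 ^ k ≤ 2 * q α n := by
    exact_mod_cast sum_q_mul_two_pow_le ha hcons hgap hs
  have htailq : (r * q α n * 2 ^ k : ℝ) ≤ q α (t i + 2) := by
    have hq : 2 ^ k * q α (n + 1) ≤ q α (t i + 2) :=
      (two_pow_mul_q_le ha _ k).trans (q_mono ha (by omega))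
    exact_mod_cast (Nat.mul_le_mul_right _ hrq).trans ((mul_comm _ _).trans_le hq)
  refine (norm_nsmul_coe_tsum_θ_le hsum i n r).trans ?_
  rw [show (4 : ℝ) / 2 ^ k = 2 / 2 ^ k + 2 / 2 ^ k by ring]
  gcongr ?_ + ?_ <;> rw [le_div_iff₀ (by positivity)]
  · calc r * |θ α n| * (∑ j ∈ Finset.range i, (q α (t j + 1) : ℝ)) * 2 ^ k
        ≤ r * |θ α n| * (2 * q α n) := by rw [mul_assoc]; gcongr
      _ = 2 * ((r * q α n : ℝ) * |θ α n|) := by ring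
      _ ≤ 2 := by linarith
  · calc (r * q α n : ℝ) * |∑' j, θ α (t (j + i) + 1)| * 2 ^ k
        = (r * q α n * 2 ^ k : ℝ) * |∑' j, θ α (t (j + i) + 1)| := by ring
      _ ≤ q α (t i + 2) * |∑' j, θ α (t (j + i) + 1)| := by gcongr
      _ ≤ 2 := htail

end Blocks

end CF

theorem densityZero_of_forall_ncard_le {A : Set ℕ}
    (h : ∀ L : ℕ, 0 < L → ∃ D : ℕ, ∀ N, (A ∩ Set.Icc 1 N).ncard ≤ D + N / L) :
    DensityZero A := by
  rw [DensityZero, Metric.tendsto_atTop]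
  intro ε hε
  obtain ⟨L, hL⟩ := exists_nat_gt (2 / ε)
  have hLpos : (0 : ℝ) < L := (by positivity : (0 : ℝ) < 2 / ε).trans hL
  obtain ⟨D, hD⟩ := h L (by exact_mod_cast hLpos)
  obtain ⟨N₀, hN₀⟩ := exists_nat_gt (2 * D / ε)
  refine ⟨N₀, fun N hN ↦ ?_⟩
  have hDN : 2 * D / ε < N := hN₀.trans_le (by exact_mod_cast hN)
  have hNpos : (0 : ℝ) < N := (by positivity : (0 : ℝ) ≤ 2 * D / ε).trans_lt hDN
  have hcount : ((A ∩ Set.Icc 1 N).ncard : ℝ) ≤ D + N / L :=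
    (Nat.cast_le.mpr (hD N)).trans (by push_cast; gcongr; exact Nat.cast_div_le)
  have hD' : (D : ℝ) < ε / 2 * N := by
    rw [div_lt_iff₀ hε] at hDN; linarith
  have hL' : (N : ℝ) / L < ε / 2 * N := by
    rw [div_lt_iff₀ hε] at hL
    rw [div_lt_iff₀ hLpos]; nlinarith
  rw [Real.dist_eq, sub_zero, abs_of_nonneg (by positivity), div_lt_iff₀ hNpos]
  linarith

section

variable {b : ℕ → ℕ}

theorem exists_mem_Ico_of_lt_succ (hb : ∀ i, b i < b (i + 1)) {i₀ n : ℕ} (hn : b i₀ ≤ n) :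
    ∃ i ≥ i₀, n ∈ Set.Ico (b i) (b (i + 1)) := by
  induction n, hn using Nat.le_induction with
  | base => exact ⟨i₀, le_rfl, le_rfl, hb i₀⟩
  | succ n _ ih =>
    obtain ⟨i, hi, hin, hni⟩ := ih
    rcases (Nat.succ_le_of_lt hni).lt_or_eq with h | h
    · exact ⟨i, hi, by omega, h⟩
    · exact ⟨i + 1, by omega, h.ge, by have := hb (i + 1); omega⟩

theorem add_mul_le_of_forall_add_le {i₀ M : ℕ} (hM : ∀ i ≥ i₀, b i + M ≤ b (i + 1)) (d : ℕ) :
    b i₀ + d * M ≤ b (i₀ + d) := by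
  induction d with
  | zero => simp
  | succ d ih =>
    have := hM (i₀ + d) (by omega)
    rw [← add_assoc]
    linarith

theorem inter_Icc_subset_Iio_union_biUnion (hb : ∀ i, b i < b (i + 1)) {i₀ M : ℕ} (hM0 : 0 < M)
    (hM : ∀ i ≥ i₀, b i + M ≤ b (i + 1)) (A : Set ℕ) (N : ℕ) :
    A ∩ Set.Icc 1 N ⊆ Set.Iio (b i₀) ∪
      ⋃ i ∈ Finset.Ico i₀ (i₀ + N / M + 1), A ∩ Set.Ico (b i) (b (i + 1)) := by
  rintro n ⟨hnA, -, hnN⟩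
  rcases lt_or_ge n (b i₀) with hn | hn
  · exact Or.inl hn
  obtain ⟨i, hi, hni⟩ := exists_mem_Ico_of_lt_succ hb hn
  have hbi := add_mul_le_of_forall_add_le hM (i - i₀)
  rw [Nat.add_sub_cancel' hi] at hbi
  have hle : i - i₀ ≤ N / M := (Nat.le_div_iff_mul_le hM0).mpr (by linarith [hni.1])
  exact Or.inr (Set.mem_biUnion (Finset.mem_coe.mpr (Finset.mem_Ico.mpr ⟨hi, by omega⟩))
    ⟨hnA, hni⟩)

theorem densityZero_of_ncard_inter_Ico_le {A : Set ℕ} (hb : ∀ i, b i < b (i + 1))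
    (hgap : Tendsto (fun i ↦ b (i + 1) - b i) atTop atTop) {C : ℕ}
    (hA : ∀ i, (A ∩ Set.Ico (b i) (b (i + 1))).ncard ≤ C) : DensityZero A := by
  refine densityZero_of_forall_ncard_le fun L hL ↦ ?_
  set M := L * (C + 1)
  obtain ⟨i₀, hi₀⟩ := (tendsto_atTop.mp hgap M).exists_forall_of_atTop
  have hM : ∀ i ≥ i₀, b i + M ≤ b (i + 1) := fun i hi ↦ by
    have := hi₀ i hi; have := hb i; omega
  refine ⟨b i₀ + C, fun N ↦ ?_⟩
  set I := Finset.Ico i₀ (i₀ + N / M + 1)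
  have hfin : (Set.Iio (b i₀) ∪ ⋃ i ∈ I, A ∩ Set.Ico (b i) (b (i + 1))).Finite :=
    (Set.finite_Iio _).union <| (Finset.finite_toSet _).biUnion fun i _ ↦
      (Set.finite_Ico _ _).subset Set.inter_subset_right
  have hdiv : N / M * C ≤ N / L := by
    rw [← Nat.div_div_eq_div_mul]
    exact (Nat.mul_le_mul_left _ (Nat.le_succ C)).trans (Nat.div_mul_le_self _ _)
  calc (A ∩ Set.Icc 1 N).ncard
      ≤ (Set.Iio (b i₀) ∪ ⋃ i ∈ I, A ∩ Set.Ico (b i) (b (i + 1))).ncard :=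
        Set.ncard_le_ncard (inter_Icc_subset_Iio_union_biUnion hb (by positivity) hM A N) hfin
    _ ≤ b i₀ + ∑ i ∈ I, (A ∩ Set.Ico (b i) (b (i + 1))).ncard := by
        refine (Set.ncard_union_le _ _).trans ?_
        rw [Set.ncard_Iio_nat]
        exact Nat.add_le_add_left (Finset.set_ncard_biUnion_le _ _) _
    _ ≤ b i₀ + (N / M + 1) * C := by
        refine Nat.add_le_add_left ((Finset.sum_le_sum fun i _ ↦ hA i).trans ?_) _
        rw [Finset.sum_const, Nat.card_Ico, smul_eq_mul, add_assoc, Nat.add_sub_cancel_left]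
    _ ≤ b i₀ + C + N / L := by linarith

end

def innerBlocks (s t : ℕ → ℕ) (k : ℕ) : Set ℕ := {n | ∃ i, s i + 2 * k ≤ n ∧ n + 2 * k ≤ t i}

theorem densityZero_compl_innerBlocks {s t : ℕ → ℕ} (hst : ∀ i, s i < t i)
    (hcons : ∀ i, s (i + 1) = t i + 2) (hgap : Tendsto (fun i ↦ t i - s i) atTop atTop)
    (k : ℕ) : DensityZero (innerBlocks s t k)ᶜ := by
  refine densityZero_of_ncard_inter_Ico_le (b := s) (C := 4 * k + 1)
    (fun i ↦ by linarith [hcons i, hst i])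
    (tendsto_atTop_mono (fun i ↦ by rw [hcons]; omega) hgap) fun i ↦ ?_
  have hsub : (innerBlocks s t k)ᶜ ∩ Set.Ico (s i) (s (i + 1)) ⊆
      Set.Ico (s i) (s i + 2 * k) ∪ Set.Ico (t i + 1 - 2 * k) (t i + 2) := by
    rintro n ⟨hn, hsn, hnt⟩
    rw [hcons] at hnt
    have : ¬(s i + 2 * k ≤ n ∧ n + 2 * k ≤ t i) := fun h ↦ hn ⟨i, h⟩
    simp only [Set.mem_union, Set.mem_Ico]
    omega
  calc _ ≤ (Set.Ico (s i) (s i + 2 * k) ∪ Set.Ico (t i + 1 - 2 * k) (t i + 2)).ncard :=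
        Set.ncard_le_ncard hsub ((Set.finite_Ico _ _).union (Set.finite_Ico _ _))
    _ ≤ 4 * k + 1 := by
        refine (Set.ncard_union_le _ _).trans ?_
        rw [Set.ncard_Ico_nat, Set.ncard_Ico_nat]
        omega

/-- **Lemma 2.1 (property (⋆)).** -/
theorem stmt_2 (α : ℝ) (hα : α ∈ Set.Ioo (0 : ℝ) 1) (hirr : Irrational α)
    (s t : ℕ → ℕ) (hst : ∀ i, s i < t i) (hcons : ∀ i, s (i + 1) = t i + 2)
    (hgap : Tendsto (fun i => t i - s i) atTop atTop)
    (β : ℝ) (hβ : β = ∑' i : ℕ, θ α (t i + 1)) :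
    ∀ ε : ℝ, 0 < ε → ∃ B : Set ℕ, DensityZero B ∧
      ∀ n ∉ B, ∀ r : ℕ, 1 ≤ r → r ≤ a α (n + 1) →
        ‖((r * q α n : ℕ) : ℤ) • (↑β : Circle1)‖ < ε := by
  intro ε hε
  have hG : ∀ n, G α n ∈ Set.Ioo (0 : ℝ) 1 := fun n ↦ (G_mem_Ioo_and_irrational hα hirr n).1
  obtain ⟨k, hk⟩ := exists_nat_gt (4 / ε)
  have hkε : 4 / 2 ^ k < ε := by
    rw [div_lt_comm₀ (by positivity) hε]
    exact hk.trans (by exact_mod_cast Nat.lt_two_pow_self)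
  refine ⟨(innerBlocks s t k)ᶜ, densityZero_compl_innerBlocks hst hcons hgap k,
    fun n hn r _ hr ↦ ?_⟩
  obtain ⟨i, hs, ht⟩ := not_not.mp hn
  rw [natCast_zsmul, hβ]
  exact (norm_nsmul_coe_tsum_θ_le_four_div hG hst hcons hs ht hr).trans_lt hkε
end
end

section
/- There exists an irrational number α = [0; a₁, a₂, …] ∈ (0,1) with (aₙ) unbounded (for instance with a_{n²} = 4n² and aₙ = 1 for n not a perfect square) such that t^s_{(qₙ)}(𝕋) ≠ t^s_{(xₙ)}(𝕋), where (qₙ) are the denominators of the convergents of α and (xₙ) is the increasing enumeration of {r qₙ : n ∈ ℕ, 1 ≤ r ≤ a_{n+1}}. -/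
/-!
Take the partial quotients `a (2 j + 1) = 2` and `a (2 j) = (2 j) ^ 2`. They are all even, so
`qₙ` is odd exactly when `n` is even, and `‖qₙ • ½‖ = ½` on a set of density `½`: the point `½`
of `𝕋` is not in `t^s_(qₙ)(𝕋)`. An odd element `r qₙ` of `{r qₙ : 1 ≤ r ≤ aₙ₊₁}` must have `n`
even and `r = 1`, so it is some `q (2 j)`; as `q (2 j)` exceeds the `a (2 j)` multiples
`r q (2 j - 1)`, its index in `(xₙ)` is at least `(j + 1) ^ 2`. Hence the odd `xₙ` have density
zero and `½ ∈ t^s_(xₙ)(𝕋)`.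
-/

open Filter Topology

noncomputable section

open CF

namespace CF

variable {α : ℝ}

theorem G_eq_of_inv_eq {b : ℕ → ℕ} {t : ℕ → ℝ} (ht : ∀ n, t (n + 1) ∈ Set.Ico 0 1)
    (hrec : ∀ n, (t n)⁻¹ = b (n + 1) + t (n + 1)) (n : ℕ) : G (t 0) n = t n := by
  induction n with
  | zero => rfl
  | succ n ih =>
    rw [G, ih, hrec, ← Int.cast_natCast, Int.fract_intCast_add, Int.fract_eq_self.mpr (ht n)]

theorem a_succ_eq_of_inv_eq {b : ℕ → ℕ} {t : ℕ → ℝ} (ht : ∀ n, t (n + 1) ∈ Set.Ico 0 1)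
    (hrec : ∀ n, (t n)⁻¹ = b (n + 1) + t (n + 1)) (n : ℕ) : a (t 0) (n + 1) = b (n + 1) := by
  rw [a, G_eq_of_inv_eq ht hrec, hrec, add_comm, Nat.floor_add_natCast (ht n).1,
    Nat.floor_eq_zero.mpr (ht n).2, zero_add]

theorem irrational_of_G_pos (hG : ∀ n, 0 < G α n) : Irrational α := by
  rintro ⟨r, rfl⟩
  -- The Gauss map strictly decreases numerators of positive rationals.
  have hdesc (n : ℕ) : ∃ s : ℚ, G r n = s ∧ s.num + n ≤ r.num := by
    induction n with
    | zero => exact ⟨r, rfl, by simp⟩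
    | succ n ih =>
      obtain ⟨s, hs, hsr⟩ := ih
      have hs_pos : 0 < s := by exact_mod_cast hs ▸ hG n
      refine ⟨Int.fract s⁻¹, by rw [G, hs, Rat.cast_fract, Rat.cast_inv], ?_⟩
      have := Rat.fract_inv_num_lt_num_of_pos hs_pos
      push_cast
      omega
  obtain ⟨s, hs, hsr⟩ := hdesc r.num.toNat
  have hs_pos : 0 < s.num := Rat.num_pos.mpr (by exact_mod_cast hs ▸ hG _)
  omega

theorem q_pos (ha : ∀ n, 0 < a α (n + 1)) : ∀ n, 0 < q α n
  | 0 => one_pos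
  | 1 => ha 0
  | n + 2 => by have := q_pos ha n; rw [q]; omega

theorem a_mul_q_lt_q (ha : ∀ n, 0 < a α (n + 1)) (n : ℕ) :
    a α (n + 2) * q α (n + 1) < q α (n + 2) := by
  have := q_pos ha n
  rw [q]
  omega

theorem odd_q_iff (ha : ∀ n, Even (a α (n + 1))) : ∀ n, Odd (q α n) ↔ Even n
  | 0 => by simp [q]
  | 1 => by simpa [q] using ha 0
  | n + 2 => by
    rw [q, Nat.odd_add', odd_q_iff ha n, Nat.even_add]
    simp [ha (n + 1)]

theorem exists_eq_q_of_odd (ha : ∀ n, Even (a α (n + 1))) (ha_odd : ∀ j, a α (2 * j + 1) ≤ 2)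
    {n r : ℕ} (hra : r ≤ a α (n + 1)) (hodd : Odd (r * q α n)) : ∃ j, r * q α n = q α (2 * j) := by
  obtain ⟨hr, hq⟩ := Nat.odd_mul.mp hodd
  obtain ⟨j, rfl⟩ := (odd_q_iff ha n).mp hq
  have : r = 1 := by
    have := ha_odd j
    rw [two_mul] at this
    obtain ⟨i, rfl⟩ := hr
    omega
  exact ⟨j, by rw [this, one_mul, two_mul]⟩

/-- The set `{r qₙ : n ∈ ℕ, 1 ≤ r ≤ aₙ₊₁}` enumerated by `(xₙ)`. -/
def convergentMultiples (α : ℝ) : Set ℕ :=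
  {m : ℕ | ∃ n r : ℕ, 1 ≤ r ∧ r ≤ a α (n + 1) ∧ m = r * q α n}

end CF

theorem dist_inv_add_inv_add_le {B u v : ℝ} (hB : 2 ≤ B) (hu : 0 ≤ u) (hv : 0 ≤ v) :
    dist (B + u)⁻¹ (B + v)⁻¹ ≤ dist u v / 4 := by
  have hprod : 4 ≤ (B + u) * (B + v) := by nlinarith
  rw [Real.dist_eq, Real.dist_eq, inv_sub_inv (by linarith) (by linarith), abs_div,
    abs_of_pos (by linarith : 0 < (B + u) * (B + v)), abs_sub_comm, add_sub_add_left_eq_sub]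
  exact div_le_div_of_nonneg_left (abs_nonneg _) four_pos hprod

section Tail

variable {b : ℕ → ℕ}

/-- `truncTail b k n = [0; b (n + 1), …, b (n + k)]`. -/
def truncTail (b : ℕ → ℕ) : ℕ → ℕ → ℝ
  | 0, _ => 0
  | k + 1, n => ((b (n + 1) : ℝ) + truncTail b k (n + 1))⁻¹

theorem truncTail_mem_Icc (hb : ∀ n, 2 ≤ b (n + 1)) (k n : ℕ) :
    truncTail b k n ∈ Set.Icc 0 (1 / 2) := by
  induction k generalizing n with
  | zero => simp [truncTail]
  | succ k ih =>
    have hb2 : (2 : ℝ) ≤ b (n + 1) := mod_cast hb n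
    have h2 : (2 : ℝ) ≤ b (n + 1) + truncTail b k (n + 1) := by linarith [(ih (n + 1)).1]
    exact ⟨by rw [truncTail]; positivity, by rw [truncTail, one_div]; exact inv_anti₀ two_pos h2⟩

theorem dist_truncTail_succ_le (hb : ∀ n, 2 ≤ b (n + 1)) (k n : ℕ) :
    dist (truncTail b k n) (truncTail b (k + 1) n) ≤ (1 / 4) ^ k := by
  induction k generalizing n with
  | zero =>
    rw [truncTail, Real.dist_eq, zero_sub, abs_neg, abs_of_nonneg (truncTail_mem_Icc hb 1 n).1]
    linarith [(truncTail_mem_Icc hb 1 n).2]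
  | succ k ih =>
    calc dist (truncTail b (k + 1) n) (truncTail b (k + 2) n)
        ≤ dist (truncTail b k (n + 1)) (truncTail b (k + 1) (n + 1)) / 4 :=
          dist_inv_add_inv_add_le (by exact_mod_cast hb n) (truncTail_mem_Icc hb k _).1
            (truncTail_mem_Icc hb (k + 1) _).1
      _ ≤ (1 / 4) ^ k / 4 := by gcongr; exact ih _
      _ = (1 / 4) ^ (k + 1) := by ring

/-- The tail `[0; b (n + 1), b (n + 2), …]` of an infinite continued fraction. -/
def tail (b : ℕ → ℕ) (n : ℕ) : ℝ :=
  limUnder atTop fun k => truncTail b k n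

theorem tendsto_truncTail (hb : ∀ n, 2 ≤ b (n + 1)) (n : ℕ) :
    Tendsto (fun k => truncTail b k n) atTop (𝓝 (tail b n)) :=
  (cauchySeq_of_le_geometric (1 / 4) 1 (by norm_num) fun k => by
    simpa using dist_truncTail_succ_le hb k n).tendsto_limUnder

theorem tail_mem_Icc (hb : ∀ n, 2 ≤ b (n + 1)) (n : ℕ) : tail b n ∈ Set.Icc 0 (1 / 2) :=
  isClosed_Icc.mem_of_tendsto (tendsto_truncTail hb n) (.of_forall (truncTail_mem_Icc hb · n))

theorem tail_inv (hb : ∀ n, 2 ≤ b (n + 1)) (n : ℕ) : (tail b n)⁻¹ = b (n + 1) + tail b (n + 1) := by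
  have hb2 : (2 : ℝ) ≤ b (n + 1) := mod_cast hb n
  have hpos : (b (n + 1) : ℝ) + tail b (n + 1) ≠ 0 := by
    linarith [(tail_mem_Icc hb (n + 1)).1]
  have hlim := ((tendsto_truncTail hb (n + 1)).const_add (b (n + 1) : ℝ)).inv₀ hpos
  rw [tendsto_nhds_unique ((tendsto_add_atTop_iff_nat 1).mpr (tendsto_truncTail hb n)) hlim,
    inv_inv]

theorem tail_mem_Ioo (hb : ∀ n, 2 ≤ b (n + 1)) (n : ℕ) : tail b n ∈ Set.Ioo 0 1 := by
  have h := tail_mem_Icc hb n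
  refine ⟨?_, by linarith [h.2]⟩
  have hb2 : (2 : ℝ) ≤ b (n + 1) := mod_cast hb n
  rw [← inv_pos, tail_inv hb]
  linarith [(tail_mem_Icc hb (n + 1)).1]

end Tail

theorem exists_irrational_a_succ_eq {b : ℕ → ℕ} (hb : ∀ n, 2 ≤ b (n + 1)) :
    ∃ α ∈ Set.Ioo (0 : ℝ) 1, Irrational α ∧ ∀ n, a α (n + 1) = b (n + 1) := by
  have ht (n : ℕ) : tail b (n + 1) ∈ Set.Ico 0 1 := Set.Ioo_subset_Ico_self (tail_mem_Ioo hb _)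
  refine ⟨tail b 0, tail_mem_Ioo hb 0, irrational_of_G_pos fun n => ?_,
    a_succ_eq_of_inv_eq ht (tail_inv hb)⟩
  rw [G_eq_of_inv_eq ht (tail_inv hb)]
  exact (tail_mem_Ioo hb n).1

theorem DensityZero.mono {A B : Set ℕ} (hB : DensityZero B) (hAB : A ⊆ B) : DensityZero A := by
  refine squeeze_zero (fun n => by positivity) (fun n => ?_) hB
  gcongr
  exact (Set.finite_Icc 1 n).inter_of_right B

theorem not_densityZero_setOf_even : ¬ DensityZero {n | Even n} := by
  intro h
  have hcount (m : ℕ) : (m : ℝ) ≤ ({n : ℕ | Even n} ∩ Set.Icc 1 (2 * m)).ncard := by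
    have hsub : (fun j => 2 * j) '' Set.Icc 1 m ⊆ {n : ℕ | Even n} ∩ Set.Icc 1 (2 * m) := by
      rintro _ ⟨j, hj, rfl⟩
      simp only [Set.mem_Icc] at hj
      exact ⟨even_two_mul j, by simp only [Set.mem_Icc]; omega⟩
    have := Set.ncard_le_ncard hsub ((Set.finite_Icc _ _).inter_of_right _)
    rw [Set.ncard_image_of_injective _ (mul_right_injective₀ two_ne_zero), Set.ncard_Icc_nat,
      Nat.add_sub_cancel] at this
    exact_mod_cast this
  have hhalf : ∀ᶠ m : ℕ in atTop, (1 / 2 : ℝ) ≤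
      (({n : ℕ | Even n} ∩ Set.Icc 1 (2 * m)).ncard : ℝ) / (2 * m : ℕ) := by
    filter_upwards [eventually_gt_atTop 0] with m hm
    rw [le_div_iff₀ (by positivity)]
    push_cast
    linarith [hcount m]
  have := ge_of_tendsto (h.comp (tendsto_id.const_mul_atTop' two_pos)) hhalf
  norm_num at this

theorem zsmul_half_eq (m : ℤ) :
    m • ((1 / 2 : ℝ) : Circle1) = if Even m then 0 else ((1 / 2 : ℝ) : Circle1) := by
  have htwo : (2 : ℤ) • ((1 / 2 : ℝ) : Circle1) = 0 := by
    rw [← AddCircle.coe_zsmul]; norm_num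
  obtain ⟨l, rfl | rfl⟩ := m.even_or_odd'
  · rw [if_pos (even_two_mul l), mul_comm, mul_zsmul, htwo, zsmul_zero]
  · rw [if_neg (Int.not_even_iff_odd.mpr (odd_two_mul_add_one l)), add_zsmul, mul_comm, mul_zsmul,
      htwo, zsmul_zero, one_zsmul, zero_add]

theorem half_mem_statCharSet_iff (a : ℕ → ℤ) :
    ((1 / 2 : ℝ) : Circle1) ∈ statCharSet a ↔ DensityZero {n | Odd (a n)} := by
  have hnorm (n : ℕ) : ‖a n • ((1 / 2 : ℝ) : Circle1)‖ = if Even (a n) then 0 else 1 / 2 := by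
    rw [zsmul_half_eq]
    split_ifs
    · exact norm_zero
    · simpa using AddCircle.norm_half_period_eq (1 : ℝ)
  have hset (ε : ℝ) (hε : 0 < ε) :
      {n | ε ≤ ‖a n • ((1 / 2 : ℝ) : Circle1)‖} ⊆ {n | Odd (a n)} := fun n hn => by
    by_contra hodd
    simp only [Set.mem_ofPred_eq, hnorm, if_pos (Int.not_odd_iff_even.mp hodd)] at hn
    linarith
  refine ⟨fun h => (h (1 / 2) one_half_pos).mono fun n hn => ?_, fun h ε hε => h.mono (hset ε hε)⟩
  rw [Set.mem_ofPred_eq, hnorm, if_neg (Int.not_even_iff_odd.mpr hn)]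

theorem densityZero_of_ncard_le_sqrt {A : Set ℕ} (hA : ∀ n, (A ∩ Set.Icc 1 n).ncard ≤ n.sqrt) :
    DensityZero A := by
  have hsqrt : Tendsto (fun n : ℕ => ((n.sqrt : ℕ) : ℝ)⁻¹) atTop (𝓝 0) :=
    (tendsto_natCast_atTop_atTop.comp
      (tendsto_atTop_atTop.mpr fun k => ⟨k * k, fun n hn => Nat.le_sqrt.mpr hn⟩)).inv_tendsto_atTop
  refine squeeze_zero (fun n => by positivity) (fun n => ?_) hsqrt
  rcases Nat.eq_zero_or_pos n with rfl | hn
  · simp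
  have hs : (0 : ℝ) < n.sqrt := by exact_mod_cast Nat.sqrt_pos.mpr hn
  have hss : (n.sqrt : ℝ) * n.sqrt ≤ n := by exact_mod_cast Nat.sqrt_le n
  have hAn : ((A ∩ Set.Icc 1 n).ncard : ℝ) ≤ n.sqrt := by exact_mod_cast hA n
  rw [div_le_iff₀ (by positivity), inv_mul_eq_div, le_div_iff₀ hs]
  nlinarith

theorem StrictMono.ncard_le_of_subset_range_inter_Iio {x : ℕ → ℕ} (hx : StrictMono x) {s : Set ℕ}
    {k : ℕ} (hs : s ⊆ Set.range x ∩ Set.Iio (x k)) : s.ncard ≤ k := by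
  have hsub : s ⊆ x '' Set.Iio k := by
    intro m hm
    obtain ⟨⟨i, rfl⟩, hi⟩ := hs hm
    exact ⟨i, hx.lt_iff_lt.mp hi, rfl⟩
  calc s.ncard ≤ (x '' Set.Iio k).ncard := Set.ncard_le_ncard hsub ((Set.finite_Iio k).image x)
    _ ≤ (Set.Iio k).ncard := Set.ncard_image_le (Set.finite_Iio k)
    _ = k := Set.ncard_Iio_nat k

section Enumeration

variable {α : ℝ} {x : ℕ → ℕ}

theorem a_le_of_eq_q (ha : ∀ n, 0 < a α (n + 1)) (hx : StrictMono x)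
    (hrange : Set.range x = convergentMultiples α) {k n : ℕ}
    (hk : x k = q α (n + 2)) : a α (n + 2) ≤ k := by
  have hq := q_pos ha (n + 1)
  have hsub : (· * q α (n + 1)) '' Set.Icc 1 (a α (n + 2)) ⊆ Set.range x ∩ Set.Iio (x k) := by
    rintro _ ⟨r, ⟨hr1, hr⟩, rfl⟩
    refine ⟨hrange ▸ ⟨n + 1, r, hr1, hr, rfl⟩, ?_⟩
    rw [Set.mem_Iio, hk]
    exact (Nat.mul_le_mul_right _ hr).trans_lt (a_mul_q_lt_q ha n)
  have := hx.ncard_le_of_subset_range_inter_Iio hsub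
  rwa [Set.ncard_image_of_injective _ (mul_left_injective₀ hq.ne'), Set.ncard_Icc_nat,
    Nat.add_sub_cancel] at this

theorem densityZero_odd_of_range_eq (ha : ∀ n, 0 < a α (n + 1)) (ha_even : ∀ n, Even (a α (n + 1)))
    (ha_odd : ∀ j, a α (2 * j + 1) ≤ 2) (ha_large : ∀ j, (j + 2) ^ 2 ≤ a α (2 * j + 2))
    (hx : StrictMono x) (hrange : Set.range x = convergentMultiples α) :
    DensityZero {k | Odd (x k)} := by
  refine densityZero_of_ncard_le_sqrt fun n => ?_
  -- An odd `x k` is some `q (2 j)`, whose index `k` is at least `a (2 j) ≥ (j + 1) ^ 2`.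
  have hmaps : ∀ k ∈ {k | Odd (x k)} ∩ Set.Icc 1 n,
      x k ∈ (fun j => q α (2 * j)) '' Set.Iio n.sqrt := by
    rintro k ⟨hodd, hk1, hkn⟩
    obtain ⟨m, r, -, hr, hxk⟩ := hrange ▸ Set.mem_range_self k
    obtain ⟨j, hj⟩ := exists_eq_q_of_odd ha_even ha_odd hr (hxk ▸ hodd)
    refine ⟨j, Nat.le_sqrt.mpr ?_, (hxk.trans hj).symm⟩
    rcases j with _ | j
    · omega
    · have := a_le_of_eq_q ha hx hrange (n := 2 * j) (hxk.trans hj)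
      nlinarith [ha_large j]
  calc ({k | Odd (x k)} ∩ Set.Icc 1 n).ncard
      ≤ ((fun j => q α (2 * j)) '' Set.Iio n.sqrt).ncard :=
        Set.ncard_le_ncard_of_injOn x hmaps hx.injective.injOn ((Set.finite_Iio _).image _)
    _ ≤ (Set.Iio n.sqrt).ncard := Set.ncard_image_le (Set.finite_Iio _)
    _ = n.sqrt := Set.ncard_Iio_nat _

end Enumeration

def evenSqOddTwo (m : ℕ) : ℕ := if Even m then m ^ 2 else 2

theorem evenSqOddTwo_two_mul_add_one (j : ℕ) : evenSqOddTwo (2 * j + 1) = 2 :=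
  if_neg (Nat.not_even_iff_odd.mpr (odd_two_mul_add_one j))

theorem evenSqOddTwo_two_mul_add_two (j : ℕ) : evenSqOddTwo (2 * j + 2) = (2 * j + 2) ^ 2 :=
  if_pos ⟨j + 1, by ring⟩

theorem even_evenSqOddTwo (n : ℕ) : Even (evenSqOddTwo n) := by
  unfold evenSqOddTwo
  split_ifs with h
  · exact (Nat.even_pow' two_ne_zero).mpr h
  · exact even_two

theorem two_le_evenSqOddTwo_succ (n : ℕ) : 2 ≤ evenSqOddTwo (n + 1) := by
  obtain ⟨j, rfl | rfl⟩ := n.even_or_odd'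
  · rw [evenSqOddTwo_two_mul_add_one]
  · rw [show 2 * j + 1 + 1 = 2 * j + 2 by ring, evenSqOddTwo_two_mul_add_two]
    exact le_trans (by omega) (Nat.le_self_pow two_ne_zero _)

/-- **Proposition 3.4.** There is an irrational `α` with unbounded partial quotients
for which `t^s_(qₙ)(𝕋) ≠ t^s_(xₙ)(𝕋)`. -/
theorem stmt_10 :
    ∃ α : ℝ, α ∈ Set.Ioo (0 : ℝ) 1 ∧ Irrational α ∧ (∀ M : ℕ, ∃ n : ℕ, M < a α n) ∧
      ∀ x : ℕ → ℕ, StrictMono x →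
        Set.range x =
          {m : ℕ | ∃ n r : ℕ, 1 ≤ r ∧ r ≤ a α (n + 1) ∧ m = r * q α n} →
        statCharSet (fun n => (q α n : ℤ)) ≠ statCharSet (fun n => (x n : ℤ)) := by
  obtain ⟨α, hα, hirr, ha⟩ := exists_irrational_a_succ_eq two_le_evenSqOddTwo_succ
  have ha_large (j : ℕ) : a α (2 * j + 2) = (2 * j + 2) ^ 2 :=
    (ha (2 * j + 1)).trans (evenSqOddTwo_two_mul_add_two j)
  have ha_pos (n : ℕ) : 0 < a α (n + 1) := ha n ▸ two_pos.trans_le (two_le_evenSqOddTwo_succ n)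
  have ha_even (n : ℕ) : Even (a α (n + 1)) := ha n ▸ even_evenSqOddTwo _
  have ha_odd (j : ℕ) : a α (2 * j + 1) ≤ 2 :=
    ((ha (2 * j)).trans (evenSqOddTwo_two_mul_add_one j)).le
  refine ⟨α, hα, hirr, fun M => ⟨2 * M + 2, ha_large M ▸ lt_of_lt_of_le (by omega)
    (Nat.le_self_pow two_ne_zero _)⟩, fun x hx hrange heq => ?_⟩
  have hx_half : ((1 / 2 : ℝ) : Circle1) ∈ statCharSet (fun n => (x n : ℤ)) := by
    rw [half_mem_statCharSet_iff]
    simp only [Int.odd_coe_nat]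
    exact densityZero_odd_of_range_eq ha_pos ha_even ha_odd
      (fun j => ha_large j ▸ Nat.pow_le_pow_left (by omega) 2) hx hrange
  have hq_half : ((1 / 2 : ℝ) : Circle1) ∉ statCharSet (fun n => (q α n : ℤ)) := by
    simpa only [half_mem_statCharSet_iff, Int.odd_coe_nat, odd_q_iff ha_even]
      using not_densityZero_setOf_even
  exact hq_half (heq ▸ hx_half)
end
end
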